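/- arXiv:2008.04971 — 2 statements merged into one kernel-verified Lean document; each statement's English description precedes it below -/
import Mathlib

section
/- There is exactly one power series σ ∈ F₂[[t]] with σ ≡ t (mod t²) satisfying the equation (1+t)³σ³ + (t³+t)σ² + (t³+t+1)σ + t³ + t = 0 in F₂[[t]]. This σ satisfies σ = t + t² + t⁴ + t⁵ + O(t⁶), has compositional order 4 (σ^{∘4} = t and σ^{∘2} ≠ t), and has lower break sequence (1,3), i.e., d(σ) = 1 and d(σ^{∘2}) = 3. -/
open PowerSeries

abbrev F2 := ZMod 2

/-- Composition of power series `σ ∘ τ` (substitution of `τ` into `σ`), valid when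
`τ` has zero constant coefficient. -/
noncomputable def ngComp (σ τ : PowerSeries F2) : PowerSeries F2 :=
  PowerSeries.mk fun k =>
    ∑ n ∈ Finset.range (k + 1), PowerSeries.coeff (R := F2) n σ * PowerSeries.coeff (R := F2) k (τ ^ n)

/-- `ngIter σ n = σ^{∘n}`, the `n`-fold compositional iterate. -/
noncomputable def ngIter (σ : PowerSeries F2) : ℕ → PowerSeries F2
  | 0 => PowerSeries.X
  | n + 1 => ngComp σ (ngIter σ n)

/-- Membership in the Nottingham group: `σ ≡ t (mod t²)`. -/
def IsNott (σ : PowerSeries F2) : Prop :=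
  PowerSeries.coeff (R := F2) 0 σ = 0 ∧ PowerSeries.coeff (R := F2) 1 σ = 1

/-- `σ` has compositional order `n`. -/
def NGOrder (σ : PowerSeries F2) (n : ℕ) : Prop :=
  ngIter σ n = PowerSeries.X ∧ ∀ m : ℕ, 0 < m → m < n → ngIter σ m ≠ PowerSeries.X

/-- `σ` has depth `m`, i.e. `ord_t (σ - t) = m + 1`. -/
def HasDepth (σ : PowerSeries F2) (m : ℕ) : Prop :=
  (∀ i < m + 1, PowerSeries.coeff (R := F2) i (σ - PowerSeries.X) = 0) ∧
    PowerSeries.coeff (R := F2) (m + 1) (σ - PowerSeries.X) ≠ 0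

/-- Conjugacy in the Nottingham group. -/
def NGConj (σ τ : PowerSeries F2) : Prop :=
  ∃ ψ : PowerSeries F2, IsNott ψ ∧ ngComp σ ψ = ngComp ψ τ

/-!
σ is the unique root in `t·F₂[[t]]` of `P(t, y) = 0`, where
`P(x, y) = (1+x)³y³ + (x³+x)y² + (x³+x+1)y + x³+x`: two such roots differ by a factor with
constant term `∂P/∂y(0, 0) = 1`, a unit, and a root exists by Hensel's lemma because `F₂[[t]]` is
`t`-adically complete. The same unit argument shows `σ ≡ t + t² + t⁴ + t⁵ (mod t⁶)`.

Substituting `σ` into `P(t, σ) = 0` gives `P(σ, σ ∘ σ) = 0`, and eliminating `σ` between the two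
cubics shows that `η = σ ∘ σ` is a root of the symmetric relation `Q(x, y) = x³y³ + x²y² + x + y`.
Hence `Q(η, t) = 0 = Q(η, η ∘ η)`, so `η ∘ η = t`, i.e. `σ` has order 4; and `Q(t, η) = 0` forces
`η ≡ t + t⁴ (mod t⁵)`, so `η` has depth 3.
-/

namespace PowerSeries

variable {R : Type*} [CommRing R]

instance instCharP (p : ℕ) [CharP R p] : CharP R⟦X⟧ p :=
  charP_of_injective_ringHom (f := C) C_injective p

theorem sModEq_span_X_pow_iff {f g : R⟦X⟧} {n : ℕ} :
    f ≡ g [SMOD (Ideal.span {(X : R⟦X⟧)} ^ n • ⊤ : Submodule R⟦X⟧ R⟦X⟧)] ↔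
      ∀ k < n, coeff k f = coeff k g := by
  rw [SModEq.sub_mem, smul_eq_mul, Ideal.mul_top, Ideal.span_singleton_pow,
    Ideal.mem_span_singleton, X_pow_dvd_iff]
  simp only [map_sub, sub_eq_zero]

instance isAdicComplete_span_X : IsAdicComplete (Ideal.span {(X : R⟦X⟧)}) R⟦X⟧ where
  haus' f hf := by
    ext k
    exact sModEq_span_X_pow_iff.mp (hf (k + 1)) k k.lt_succ_self
  prec' f hf := by
    refine ⟨mk fun k ↦ coeff k (f (k + 1)), fun n ↦ sModEq_span_X_pow_iff.mpr fun k hk ↦ ?_⟩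
    rw [coeff_mk]
    exact (sModEq_span_X_pow_iff.mp (hf (show k + 1 ≤ n by omega)) k k.lt_succ_self).symm

theorem coeff_eq_of_X_pow_dvd_sub {f g : R⟦X⟧} {n k : ℕ} (h : X ^ n ∣ f - g) (hk : k < n) :
    coeff k f = coeff k g :=
  sub_eq_zero.mp (by simpa using X_pow_dvd_iff.mp h k hk)

end PowerSeries

theorem HenselianRing.exists_root_of_isUnit_leadingCoeff {A : Type*} [CommRing A] {I : Ideal A}
    [HenselianRing A I] {f : Polynomial A} (hf : IsUnit f.leadingCoeff) {a₀ : A}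
    (h₀ : f.eval a₀ ∈ I) (h₁ : IsUnit (Ideal.Quotient.mk I (f.derivative.eval a₀))) :
    ∃ a, f.IsRoot a ∧ a - a₀ ∈ I := by
  obtain ⟨u, hu⟩ := hf
  have hmonic : (Polynomial.C (↑u⁻¹ : A) * f).Monic :=
    Polynomial.monic_C_mul_of_mul_leadingCoeff_eq_one (by rw [← hu, Units.inv_mul])
  obtain ⟨a, ha, haI⟩ := HenselianRing.is_henselian _ hmonic a₀
    (by simpa using I.mul_mem_left (↑u⁻¹ : A) h₀)
    (by simpa using ((Units.isUnit u⁻¹).map (Ideal.Quotient.mk I)).mul h₁)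
  refine ⟨a, ?_, haI⟩
  simpa [Polynomial.IsRoot] using ha

namespace NottinghamOrderFour

section Curves

variable {A : Type*} [CommRing A]

def cubicRel (x y : A) : A :=
  (1 + x) ^ 3 * y ^ 3 + (x ^ 3 + x) * y ^ 2 + (x ^ 3 + x + 1) * y + x ^ 3 + x

def involRel (x y : A) : A :=
  x ^ 3 * y ^ 3 + x ^ 2 * y ^ 2 + y + x

theorem involRel_comm (x y : A) : involRel x y = involRel y x := by
  unfold involRel; ring

theorem map_cubicRel {B F : Type*} [CommRing B] [FunLike F A B] [RingHomClass F A B] (f : F)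
    (x y : A) : f (cubicRel x y) = cubicRel (f x) (f y) := by
  simp [cubicRel]

theorem map_involRel {B F : Type*} [CommRing B] [FunLike F A B] [RingHomClass F A B] (f : F)
    (x y : A) : f (involRel x y) = involRel (f x) (f y) := by
  simp [involRel]

theorem cubicRel_sub_cubicRel (x y y' : A) :
    cubicRel x y - cubicRel x y' = (y - y') *
      ((1 + x) ^ 3 * (y ^ 2 + y * y' + y' ^ 2) + (x ^ 3 + x) * (y + y') + (x ^ 3 + x + 1)) := by
  unfold cubicRel; ring

theorem involRel_sub_involRel (x y y' : A) :
    involRel x y - involRel x y' =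
      (y - y') * (x ^ 3 * (y ^ 2 + y * y' + y' ^ 2) + x ^ 2 * (y + y') + 1) := by
  unfold involRel; ring

theorem cubicRel_approx [CharP A 2] (x : A) :
    cubicRel x (x + x ^ 2 + x ^ 4 + x ^ 5) =
      x ^ 6 * (x + x ^ 3 + x ^ 4 + x ^ 5 + x ^ 8 + x ^ 9 + x ^ 10 + x ^ 12) := by
  unfold cubicRel
  linear_combination (norm := ring_nf)
  reduce_mod_char!

theorem involRel_approx [CharP A 2] (x : A) :
    involRel x (x + x ^ 4) = x ^ 5 * (x + x ^ 4 + x ^ 5 + x ^ 7 + x ^ 10) := by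
  unfold involRel
  linear_combination (norm := ring_nf)
  reduce_mod_char!

end Curves

section PowerSeries

variable {R : Type*} [CommRing R]

theorem dvd_cubicRel_iff {x y y' d : R⟦X⟧} (hx : constantCoeff x = 0) (hy : constantCoeff y = 0)
    (hy' : constantCoeff y' = 0) (h : cubicRel x y = 0) : d ∣ cubicRel x y' ↔ d ∣ y - y' := by
  have hu : IsUnit ((1 + x) ^ 3 * (y ^ 2 + y * y' + y' ^ 2) + (x ^ 3 + x) * (y + y') +
      (x ^ 3 + x + 1)) := isUnit_iff_constantCoeff.mpr (by simp [hx, hy, hy'])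
  rw [← dvd_neg, ← zero_sub, ← h, cubicRel_sub_cubicRel, hu.dvd_mul_right]

theorem dvd_involRel_iff {x y y' d : R⟦X⟧} (hx : constantCoeff x = 0) (hy : constantCoeff y = 0)
    (hy' : constantCoeff y' = 0) (h : involRel x y = 0) : d ∣ involRel x y' ↔ d ∣ y - y' := by
  have hu : IsUnit (x ^ 3 * (y ^ 2 + y * y' + y' ^ 2) + x ^ 2 * (y + y') + 1) :=
    isUnit_iff_constantCoeff.mpr (by simp [hx, hy, hy'])
  rw [← dvd_neg, ← zero_sub, ← h, involRel_sub_involRel, hu.dvd_mul_right]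

theorem eq_of_cubicRel_eq_zero {x y y' : R⟦X⟧} (hx : constantCoeff x = 0)
    (hy : constantCoeff y = 0) (hy' : constantCoeff y' = 0) (h : cubicRel x y = 0)
    (h' : cubicRel x y' = 0) : y = y' :=
  sub_eq_zero.mp <| zero_dvd_iff.mp <| (dvd_cubicRel_iff (d := 0) hx hy hy' h).mp (by rw [h'])

theorem eq_of_involRel_eq_zero {x y y' : R⟦X⟧} (hx : constantCoeff x = 0)
    (hy : constantCoeff y = 0) (hy' : constantCoeff y' = 0) (h : involRel x y = 0)
    (h' : involRel x y' = 0) : y = y' :=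
  sub_eq_zero.mp <| zero_dvd_iff.mp <| (dvd_involRel_iff (d := 0) hx hy hy' h).mp (by rw [h'])

theorem X_pow_six_dvd_sub_of_cubicRel [CharP R 2] {σ : R⟦X⟧} (hσ : constantCoeff σ = 0)
    (h : cubicRel X σ = 0) : X ^ 6 ∣ σ - (X + X ^ 2 + X ^ 4 + X ^ 5) :=
  (dvd_cubicRel_iff constantCoeff_X hσ (by simp) h).mp
    (cubicRel_approx (X : R⟦X⟧) ▸ dvd_mul_right _ _)

theorem X_pow_five_dvd_sub_of_involRel [CharP R 2] {η : R⟦X⟧} (hη : constantCoeff η = 0)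
    (h : involRel X η = 0) : X ^ 5 ∣ η - (X + X ^ 4) :=
  (dvd_involRel_iff constantCoeff_X hη (by simp) h).mp
    (involRel_approx (X : R⟦X⟧) ▸ dvd_mul_right _ _)

theorem exists_cubicRel_eq_zero [Nontrivial R] :
    ∃ σ : R⟦X⟧, constantCoeff σ = 0 ∧ cubicRel X σ = 0 := by
  let f : Polynomial R⟦X⟧ := .C ((1 + X) ^ 3) * .X ^ 3 + .C (X ^ 3 + X) * .X ^ 2 +
    .C (X ^ 3 + X + 1) * .X + .C (X ^ 3 + X)
  have hu : IsUnit (1 + X : R⟦X⟧) := isUnit_iff_constantCoeff.mpr (by simp)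
  obtain ⟨σ, hσ, hσI⟩ := HenselianRing.exists_root_of_isUnit_leadingCoeff
    (I := Ideal.span {(X : R⟦X⟧)}) (f := f) (a₀ := 0)
    (by rw [Polynomial.leadingCoeff_cubic (hu.pow 3).ne_zero]; exact hu.pow 3)
    (Ideal.mem_span_singleton.mpr (Dvd.intro (X ^ 2 + 1) (by simp [f]; ring)))
    ((isUnit_iff_constantCoeff.mpr (by simp [f, Polynomial.derivative_pow])).map _)
  refine ⟨σ, by simpa using X_dvd_iff.mp (Ideal.mem_span_singleton.mp hσI), ?_⟩
  simp only [f, Polynomial.IsRoot, Polynomial.eval_add, Polynomial.eval_mul, Polynomial.eval_C,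
    Polynomial.eval_pow, Polynomial.eval_X] at hσ
  unfold cubicRel
  linear_combination hσ

-- The unit `w` in `hw` and the two multipliers below were found by solving the linear system
-- `a * cubicRel x y + b * cubicRel y z = involRel x z * w`, `w ≡ 1`, over `F₂` in bounded degree.
theorem involRel_eq_zero_of_cubicRel [CharP R 2] {x y z : R⟦X⟧} (hx : constantCoeff x = 0)
    (hy : constantCoeff y = 0) (hz : constantCoeff z = 0) (hxy : cubicRel x y = 0)
    (hyz : cubicRel y z = 0) : involRel x z = 0 := by
  have hw : IsUnit (1 + y + z ^ 2 + y * z + x * z + x ^ 2 + x * z ^ 2 + x ^ 2 * z + y ^ 4 +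
      x * y * z ^ 2 + x ^ 2 * y * z + x ^ 2 * y ^ 2 + y ^ 5 + x * y ^ 2 * z ^ 2 + x ^ 2 * y ^ 3 +
      y ^ 4 * z ^ 2 + y ^ 5 * z + x * y ^ 3 * z ^ 2 + x * y ^ 4 * z + x ^ 2 * y ^ 4 * z +
      x ^ 2 * y ^ 5 + x ^ 2 * y ^ 5 * z) :=
    isUnit_iff_constantCoeff.mpr (by simp [hx, hy, hz])
  refine hw.mul_left_eq_zero.mp ?_
  -- `reduce_mod_char!` only finds the characteristic among the local hypotheses.
  have : CharP R⟦X⟧ 2 := inferInstance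
  unfold cubicRel involRel at *
  linear_combination (norm := ring_nf)
    (1 + y * z + y ^ 2 + z ^ 3 + x * y * z + x * y ^ 2 * z + y ^ 2 * z ^ 3 + x * y * z ^ 3 +
      x ^ 2 * z ^ 3 + x * y ^ 2 * z ^ 3 + x ^ 2 * z ^ 4 + x ^ 2 * y * z ^ 3 + x ^ 2 * y ^ 2 * z ^ 3 +
      x ^ 2 * y ^ 2 * z ^ 4) * hxy +
    (1 + y ^ 2 + x ^ 2 * z + x ^ 3 + x ^ 2 * y ^ 2 + x ^ 3 * y + x ^ 2 * y ^ 2 * z + x ^ 3 * z ^ 2 +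
      x ^ 4 * z + x ^ 3 * y * z ^ 2 + x ^ 4 * z ^ 2 + x ^ 4 * y ^ 2 * z) * hyz
  reduce_mod_char!

theorem cubicRel_subst_self {σ : R⟦X⟧} (hσ : constantCoeff σ = 0) (h : cubicRel X σ = 0) :
    cubicRel σ (σ.subst σ) = 0 := by
  have hσ' := HasSubst.of_constantCoeff_zero' hσ
  have := congrArg (substAlgHom hσ') h
  rwa [map_cubicRel, map_zero, coe_substAlgHom, subst_X hσ'] at this

theorem involRel_subst_self {η : R⟦X⟧} (hη : constantCoeff η = 0) (h : involRel X η = 0) :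
    involRel η (η.subst η) = 0 := by
  have hη' := HasSubst.of_constantCoeff_zero' hη
  have := congrArg (substAlgHom hη') h
  rwa [map_involRel, map_zero, coe_substAlgHom, subst_X hη'] at this

theorem involRel_X_subst_self [CharP R 2] {σ : R⟦X⟧} (hσ : constantCoeff σ = 0)
    (h : cubicRel X σ = 0) : involRel X (σ.subst σ) = 0 :=
  involRel_eq_zero_of_cubicRel constantCoeff_X hσ (constantCoeff_subst_eq_zero hσ σ hσ) h
    (cubicRel_subst_self hσ h)

theorem subst_self_eq_X_of_involRel {η : R⟦X⟧} (hη : constantCoeff η = 0)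
    (h : involRel X η = 0) : η.subst η = X :=
  eq_of_involRel_eq_zero hη (constantCoeff_subst_eq_zero hη η hη) constantCoeff_X
    (involRel_subst_self hη h) (by rwa [involRel_comm])

end PowerSeries

theorem ngComp_eq_subst {σ τ : PowerSeries F2} (hτ : constantCoeff τ = 0) :
    ngComp σ τ = σ.subst τ := by
  ext k
  rw [ngComp, coeff_mk, coeff_subst' (HasSubst.of_constantCoeff_zero' hτ),
    finsum_eq_sum_of_support_subset (s := Finset.range (k + 1))]
  · simp only [smul_eq_mul]
  · intro d hd
    by_contra hdk
    refine hd ?_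
    show coeff d σ • coeff k (τ ^ d) = 0
    rw [X_pow_dvd_iff.mp (pow_dvd_pow_of_dvd (X_dvd_iff.mpr hτ) d) k (by simpa using hdk),
      smul_zero]

theorem ngIter_one (σ : PowerSeries F2) : ngIter σ 1 = σ :=
  (ngComp_eq_subst constantCoeff_X).trans (X_subst σ)

theorem constantCoeff_ngIter {σ : PowerSeries F2} (hσ : constantCoeff σ = 0) (n : ℕ) :
    constantCoeff (ngIter σ n) = 0 := by
  induction n with
  | zero => exact constantCoeff_X
  | succ n ih => rw [ngIter, ngComp_eq_subst ih]; exact constantCoeff_subst_eq_zero ih σ hσ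

theorem ngIter_add {σ : PowerSeries F2} (hσ : constantCoeff σ = 0) (m n : ℕ) :
    ngIter σ (m + n) = (ngIter σ m).subst (ngIter σ n) := by
  have hsubst := fun k ↦ HasSubst.of_constantCoeff_zero' (constantCoeff_ngIter hσ k)
  induction m with
  | zero => rw [zero_add, ngIter, subst_X (hsubst n)]
  | succ m ih =>
    rw [Nat.add_right_comm, ngIter, ngIter, ngComp_eq_subst (constantCoeff_ngIter hσ _), ih,
      ngComp_eq_subst (constantCoeff_ngIter hσ _), subst_comp_subst_apply (hsubst m) (hsubst n)]

theorem ngOrder_four_of {σ : PowerSeries F2} (hσ : constantCoeff σ = 0) (h2 : ngIter σ 2 ≠ X)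
    (h4 : ngIter σ 4 = X) : NGOrder σ 4 := by
  have h1 : ngIter σ 1 ≠ X := fun h1 ↦ h2 (by rw [ngIter_add hσ 1 1, h1, X_subst])
  refine ⟨h4, fun m hm0 hm4 ↦ ?_⟩
  interval_cases m
  · exact h1
  · exact h2
  · exact fun h3 ↦ h1 (by rw [← h4, ngIter_add hσ 1 3, h3, X_subst])

theorem hasDepth_of_X_pow_dvd_sub {σ : PowerSeries F2} {m : ℕ}
    (h : X ^ (m + 2) ∣ σ - (X + X ^ (m + 1))) : HasDepth σ m := by
  have hc : ∀ i < m + 2, coeff i (σ - X) = coeff i (X ^ (m + 1) : PowerSeries F2) := by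
    intro i hi
    rw [show σ - X = σ - (X + X ^ (m + 1)) + X ^ (m + 1) by ring, map_add,
      X_pow_dvd_iff.mp h i hi, zero_add]
  refine ⟨fun i hi ↦ ?_, ?_⟩
  · rw [hc i (by omega), coeff_X_pow, if_neg (by omega)]
  · rw [hc _ (by omega), coeff_X_pow_self]
    exact one_ne_zero

theorem HasDepth.ne_X {σ : PowerSeries F2} {m : ℕ} (h : HasDepth σ m) : σ ≠ X :=
  fun hσ ↦ h.2 (by simp [hσ])

theorem isNott_of_cubicRel {σ : PowerSeries F2} (hσ : constantCoeff σ = 0)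
    (h : cubicRel X σ = 0) : IsNott σ :=
  ⟨by simpa using hσ, by
    simpa [coeff_X] using coeff_eq_of_X_pow_dvd_sub (X_pow_six_dvd_sub_of_cubicRel hσ h)
      (show 1 < 6 by norm_num)⟩

end NottinghamOrderFour

open NottinghamOrderFour

theorem statement3 :
    (∃! σ : PowerSeries F2, IsNott σ ∧
        (1 + PowerSeries.X) ^ 3 * σ ^ 3 + (PowerSeries.X ^ 3 + PowerSeries.X) * σ ^ 2 +
          (PowerSeries.X ^ 3 + PowerSeries.X + 1) * σ + PowerSeries.X ^ 3 + PowerSeries.X = 0) ∧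
    ∀ σ : PowerSeries F2, IsNott σ →
      (1 + PowerSeries.X) ^ 3 * σ ^ 3 + (PowerSeries.X ^ 3 + PowerSeries.X) * σ ^ 2 +
          (PowerSeries.X ^ 3 + PowerSeries.X + 1) * σ + PowerSeries.X ^ 3 + PowerSeries.X = 0 →
      PowerSeries.coeff (R := F2) 2 σ = 1 ∧ PowerSeries.coeff (R := F2) 3 σ = 0 ∧
      PowerSeries.coeff (R := F2) 4 σ = 1 ∧ PowerSeries.coeff (R := F2) 5 σ = 1 ∧
      NGOrder σ 4 ∧ HasDepth σ 1 ∧ HasDepth (ngIter σ 2) 3 := by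
  refine ⟨?_, fun σ hσ h ↦ ?_⟩
  · obtain ⟨σ, hσ0, h⟩ := exists_cubicRel_eq_zero (R := F2)
    refine ⟨σ, ⟨isNott_of_cubicRel hσ0 h, h⟩, fun τ ⟨hτ, hτ'⟩ ↦ ?_⟩
    exact eq_of_cubicRel_eq_zero constantCoeff_X (by simpa using hτ.1) hσ0 hτ' h
  have hσ0 : constantCoeff σ = 0 := by simpa using hσ.1
  have hσ6 := X_pow_six_dvd_sub_of_cubicRel hσ0 h
  have hη : ngIter σ 2 = σ.subst σ := by rw [ngIter_add hσ0 1 1, ngIter_one]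
  have hη0 : constantCoeff (σ.subst σ) = 0 := hη ▸ constantCoeff_ngIter hσ0 2
  have hη5 := X_pow_five_dvd_sub_of_involRel hη0 (involRel_X_subst_self hσ0 h)
  have hdepth : HasDepth (ngIter σ 2) 3 := hη ▸ hasDepth_of_X_pow_dvd_sub hη5
  have hσ3 : X ^ 3 ∣ σ - (X + X ^ 2) := by
    rw [show σ - (X + X ^ 2) = σ - (X + X ^ 2 + X ^ 4 + X ^ 5) + X ^ 3 * (X + X ^ 2) by ring]
    exact dvd_add ((pow_dvd_pow X (by norm_num)).trans hσ6) (dvd_mul_right _ _)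
  refine ⟨?_, ?_, ?_, ?_, ngOrder_four_of hσ0 hdepth.ne_X ?_,
    hasDepth_of_X_pow_dvd_sub hσ3, hdepth⟩
  · simpa [coeff_X] using coeff_eq_of_X_pow_dvd_sub hσ6 (show 2 < 6 by norm_num)
  · simpa [coeff_X] using coeff_eq_of_X_pow_dvd_sub hσ6 (show 3 < 6 by norm_num)
  · simpa [coeff_X] using coeff_eq_of_X_pow_dvd_sub hσ6 (show 4 < 6 by norm_num)
  · simpa [coeff_X] using coeff_eq_of_X_pow_dvd_sub hσ6 (show 5 < 6 by norm_num)
  · rw [ngIter_add hσ0 2 2, hη]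
    exact subst_self_eq_X_of_involRel hη0 (involRel_X_subst_self hσ0 h)
end

section
/- Every element σ ≠ t of finite compositional order in 𝒩(F₂) has odd depth. More precisely, if σ = t + t^k + O(t^{k+1}) ∈ 𝒩(F₂) with k ≥ 2 odd (i.e., d(σ) = k − 1 is even), then σ^{∘2ⁿ} = t + t^{2ⁿ(k−1)+1} + O(t^{2ⁿ(k−1)+2}) for every n ≥ 1; in particular σ^{∘2ⁿ} ≠ t for all n, so σ is not of finite order. -/
open PowerSeries

/-!
Let `σ = t + t^k + O(t^{k+1})` with `k` odd and write `σ = t + t^k + d`. Substitution gives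
`σ ∘ σ = σ + σ^k + d ∘ σ`. Modulo `t^{2k}`, the binomial theorem gives
`σ^k ≡ t^k + k t^{2k-1} = t^k + t^{2k-1}`, and `d ∘ σ ≡ d` because `d = O(t^{k+1})` and
`σ ≡ t (mod t^k)`; in characteristic `2` the two copies of `t^k + d` cancel, so
`σ ∘ σ = t + t^{2k-1} + O(t^{2k})`. Hence `σ^{∘2ⁿ}` has depth `2ⁿ(k-1)`, strictly increasing
in `n`. If `σ^{∘N} = t`, the iterates depend only on the exponent modulo `N`, and pigeonhole gives
`a ≠ b` with `2^a ≡ 2^b (mod N)`: two of these iterates of different depths would coincide.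
-/

instance PowerSeries.charP {R : Type*} [CommRing R] (p : ℕ) [CharP R p] : CharP R⟦X⟧ p :=
  charP_of_injective_ringHom C_injective p

lemma pow_add_dvd_pow_succ_sub_pow_succ {R : Type*} [CommRing R] {x a b : R} {k : ℕ}
    (hab : x ^ k ∣ a - b) (ha : x ∣ a) (hb : x ∣ b) (n : ℕ) :
    x ^ (k + n) ∣ a ^ (n + 1) - b ^ (n + 1) := by
  rw [← geom_sum₂_mul, pow_add, mul_comm]
  refine mul_dvd_mul (Finset.dvd_sum fun i hi => ?_) hab
  have hi : i + (n + 1 - 1 - i) = n := by simp only [Finset.mem_range] at hi; omega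
  simpa only [← pow_add, hi] using
    mul_dvd_mul (pow_dvd_pow_of_dvd ha i) (pow_dvd_pow_of_dvd hb (n + 1 - 1 - i))

lemma PowerSeries.X_pow_succ_dvd_sub_X_pow_iff {R : Type*} [CommRing R] {g : R⟦X⟧} {k : ℕ} :
    X ^ (k + 1) ∣ g - X ^ k ↔ (∀ i < k, coeff i g = 0) ∧ coeff k g = 1 := by
  simp only [X_pow_dvd_iff, map_sub, coeff_X_pow, Nat.lt_succ_iff_lt_or_eq, or_imp, forall_and,
    forall_eq, if_true, sub_eq_zero]
  refine and_congr (forall₂_congr fun i hi => ?_) Iff.rfl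
  rw [if_neg hi.ne]

lemma PowerSeries.eq_of_X_pow_succ_dvd_sub_X_pow {R : Type*} [CommRing R] [Nontrivial R]
    {g : R⟦X⟧} {a b : ℕ} (ha : X ^ (a + 1) ∣ g - X ^ a) (hb : X ^ (b + 1) ∣ g - X ^ b) :
    a = b := by
  rw [X_pow_succ_dvd_sub_X_pow_iff] at ha hb
  by_contra hne
  rcases Nat.lt_or_gt_of_ne hne with h | h
  · exact one_ne_zero (ha.2.symm.trans (hb.1 a h))
  · exact one_ne_zero (hb.2.symm.trans (ha.1 b h))

lemma coeff_ngComp (σ τ : F2⟦X⟧) (k : ℕ) :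
    coeff k (ngComp σ τ) = ∑ n ∈ Finset.range (k + 1), coeff n σ * coeff k (τ ^ n) :=
  coeff_mk _ _

lemma ngComp_eq_subst (σ : F2⟦X⟧) {τ : F2⟦X⟧} (hτ : constantCoeff τ = 0) :
    ngComp σ τ = σ.subst τ := by
  ext k
  rw [coeff_ngComp, coeff_subst' (HasSubst.of_constantCoeff_zero' hτ),
    finsum_eq_sum_of_support_subset _ (s := Finset.range (k + 1))]
  · rfl
  · intro n hn
    by_contra hnk
    simp only [Finset.coe_range, Set.mem_Iio, not_lt] at hnk
    have : coeff k (τ ^ n) = 0 :=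
      X_pow_dvd_iff.mp (pow_dvd_pow_of_dvd (X_dvd_iff.mpr hτ) n) k (by omega)
    simp [this] at hn

lemma constantCoeff_ngComp (σ τ : F2⟦X⟧) :
    constantCoeff (ngComp σ τ) = constantCoeff σ := by
  rw [← coeff_zero_eq_constantCoeff_apply, ← coeff_zero_eq_constantCoeff_apply, coeff_ngComp]
  simp

lemma ngComp_X (σ : F2⟦X⟧) : ngComp σ X = σ := by
  rw [ngComp_eq_subst σ constantCoeff_X, X_subst]

lemma X_ngComp {τ : F2⟦X⟧} (hτ : constantCoeff τ = 0) : ngComp X τ = τ := by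
  rw [ngComp_eq_subst X hτ, subst_X (HasSubst.of_constantCoeff_zero' hτ)]

lemma X_pow_dvd_ngComp_sub_ngComp {f a b : F2⟦X⟧} {j : ℕ}
    (h : ∀ n, coeff n f ≠ 0 → X ^ j ∣ a ^ n - b ^ n) :
    X ^ j ∣ ngComp f a - ngComp f b := by
  refine X_pow_dvd_iff.mpr fun m hm => ?_
  rw [map_sub, coeff_ngComp, coeff_ngComp, ← Finset.sum_sub_distrib]
  refine Finset.sum_eq_zero fun n _ => ?_
  by_cases hn : coeff n f = 0
  · simp [hn]
  · rw [← mul_sub, ← map_sub, X_pow_dvd_iff.mp (h n hn) m hm, mul_zero]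

lemma constantCoeff_ngIter {σ : F2⟦X⟧} (hσ : constantCoeff σ = 0) (n : ℕ) :
    constantCoeff (ngIter σ n) = 0 := by
  cases n with
  | zero => exact constantCoeff_X
  | succ n => rw [ngIter, constantCoeff_ngComp, hσ]

lemma ngIter_add {σ : F2⟦X⟧} (hσ : constantCoeff σ = 0) (m n : ℕ) :
    ngIter σ (m + n) = ngComp (ngIter σ m) (ngIter σ n) := by
  have hn := constantCoeff_ngIter hσ n
  induction m with
  | zero => rw [zero_add, ngIter, X_ngComp hn]
  | succ m ih =>
    have hm := constantCoeff_ngIter hσ m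
    have hmn : constantCoeff (ngComp (ngIter σ m) (ngIter σ n)) = 0 := by
      rw [constantCoeff_ngComp, hm]
    rw [Nat.add_right_comm, ngIter, ngIter, ih, ngComp_eq_subst σ hmn, ngComp_eq_subst _ hn,
      ngComp_eq_subst _ hn, ngComp_eq_subst σ hm,
      subst_comp_subst_apply (HasSubst.of_constantCoeff_zero' hm)
        (HasSubst.of_constantCoeff_zero' hn)]

lemma ngIter_mul_eq_X {σ : F2⟦X⟧} (hσ : constantCoeff σ = 0) {N : ℕ} (hN : ngIter σ N = X)
    (q : ℕ) : ngIter σ (N * q) = X := by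
  induction q with
  | zero => rfl
  | succ q ih => rw [Nat.mul_succ, ngIter_add hσ, ih, hN, X_ngComp constantCoeff_X]

lemma ngIter_eq_of_modEq {σ : F2⟦X⟧} (hσ : constantCoeff σ = 0) {N : ℕ}
    (hN : ngIter σ N = X) {a b : ℕ} (hab : a ≡ b [MOD N]) : ngIter σ a = ngIter σ b := by
  have hmod (c : ℕ) : ngIter σ c = ngIter σ (c % N) := by
    conv_lhs => rw [← Nat.div_add_mod c N]
    rw [ngIter_add hσ, ngIter_mul_eq_X hσ hN, X_ngComp (constantCoeff_ngIter hσ _)]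
  rw [hmod a, hmod b, hab]

/-- `σ = t + t^k + O(t^{k+1})`. -/
def HasLeadingTerm (σ : F2⟦X⟧) (k : ℕ) : Prop :=
  X ^ (k + 1) ∣ σ - X - X ^ k

lemma hasLeadingTerm_iff {σ : F2⟦X⟧} {k : ℕ} :
    HasLeadingTerm σ k ↔ (∀ i < k, coeff i (σ - X) = 0) ∧ coeff k (σ - X) = 1 :=
  X_pow_succ_dvd_sub_X_pow_iff

namespace HasLeadingTerm

variable {σ : F2⟦X⟧} {j k : ℕ}

lemma X_pow_dvd_sub_X (hσ : HasLeadingTerm σ k) : X ^ k ∣ σ - X :=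
  sub_add_cancel (σ - X) (X ^ k) ▸ dvd_add ((pow_dvd_pow X k.le_succ).trans hσ) dvd_rfl

lemma X_dvd (hσ : HasLeadingTerm σ k) (hk : 0 < k) : X ∣ σ :=
  sub_add_cancel σ X ▸ dvd_add ((dvd_pow_self X hk.ne').trans hσ.X_pow_dvd_sub_X) dvd_rfl

lemma constantCoeff_eq_zero (hσ : HasLeadingTerm σ k) (hk : 0 < k) : constantCoeff σ = 0 :=
  X_dvd_iff.mp (hσ.X_dvd hk)

lemma X_pow_dvd_pow_sub (hσ : HasLeadingTerm σ (2 * j + 1)) :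
    X ^ (2 * (2 * j) + 1 + 1) ∣ σ ^ (2 * j + 1) - X ^ (2 * j + 1) - X ^ (2 * (2 * j) + 1) := by
  have hsq : X ^ (2 * (2 * j) + 1 + 1) ∣ (σ - X) ^ 2 := by
    rw [show 2 * (2 * j) + 1 + 1 = (2 * j + 1) * 2 by ring, pow_mul]
    exact pow_dvd_pow_of_dvd hσ.X_pow_dvd_sub_X 2
  have hlin : X ^ (2 * (2 * j) + 1 + 1) ∣
      X ^ (2 * j) * (σ - X) * ((2 * j + 1 : ℕ) : F2⟦X⟧) - X ^ (2 * (2 * j) + 1) := by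
    rw [CharTwo.natCast_eq_ite, if_neg (by simp), mul_one,
      show X ^ (2 * j) * (σ - X) - X ^ (2 * (2 * j) + 1) = X ^ (2 * j) * (σ - X - X ^ (2 * j + 1))
        by ring,
      show (X : F2⟦X⟧) ^ (2 * (2 * j) + 1 + 1) = X ^ (2 * j) * X ^ (2 * j + 1 + 1) by ring]
    exact mul_dvd_mul_left _ hσ
  have taylor := sq_dvd_add_pow_sub_sub (σ - X) X (2 * j + 1)
  rw [add_sub_cancel, Nat.add_sub_cancel] at taylor
  convert dvd_add (hsq.trans taylor) hlin using 1
  ring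

lemma X_pow_dvd_subst_sub_self (hσ : HasLeadingTerm σ (2 * j + 1)) :
    X ^ (2 * (2 * j) + 1 + 1) ∣
      (σ - X - X ^ (2 * j + 1)).subst σ - (σ - X - X ^ (2 * j + 1)) := by
  rw [← ngComp_eq_subst _ (hσ.constantCoeff_eq_zero (Nat.succ_pos _))]
  nth_rewrite 2 [← ngComp_X (σ - X - X ^ (2 * j + 1))]
  refine X_pow_dvd_ngComp_sub_ngComp fun n hn => ?_
  have hlt : 2 * j + 1 + 1 ≤ n := by
    by_contra h
    exact hn (X_pow_dvd_iff.mp hσ n (by omega))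
  obtain ⟨m, rfl⟩ : ∃ m, n = m + 1 := ⟨n - 1, by omega⟩
  exact (pow_dvd_pow X (by omega)).trans <| pow_add_dvd_pow_succ_sub_pow_succ
    hσ.X_pow_dvd_sub_X (hσ.X_dvd (Nat.succ_pos _)) dvd_rfl m

lemma ngComp_self (hσ : HasLeadingTerm σ (2 * j + 1)) :
    HasLeadingTerm (ngComp σ σ) (2 * (2 * j) + 1) := by
  set d := σ - X - X ^ (2 * j + 1) with hd
  have hσ0 := hσ.constantCoeff_eq_zero (Nat.succ_pos _)
  have hs := HasSubst.of_constantCoeff_zero' hσ0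
  have hsplit : ngComp σ σ = σ + σ ^ (2 * j + 1) + d.subst σ := by
    calc ngComp σ σ = (X + X ^ (2 * j + 1) + d).subst σ := by
          rw [ngComp_eq_subst σ hσ0, hd]
          congr 1
          ring
      _ = σ + σ ^ (2 * j + 1) + d.subst σ := by
          rw [subst_add hs, subst_add hs, subst_pow hs, subst_X hs]
  have hchar : X ^ (2 * j + 1) + d + (X ^ (2 * j + 1) + d) = 0 := CharTwo.add_self_eq_zero _
  unfold HasLeadingTerm
  rw [hsplit]
  convert dvd_add hσ.X_pow_dvd_pow_sub hσ.X_pow_dvd_subst_sub_self using 1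
  linear_combination hchar

lemma ngIter_two_pow (hσ : HasLeadingTerm σ (2 * j + 1)) (n : ℕ) :
    HasLeadingTerm (ngIter σ (2 ^ n)) (2 ^ n * (2 * j) + 1) := by
  induction n with
  | zero => simpa [ngIter, ngComp_X] using hσ
  | succ n ih =>
    rw [show 2 ^ n * (2 * j) = 2 * (2 ^ n * j) by ring] at ih
    rw [show 2 ^ (n + 1) * (2 * j) = 2 * (2 * (2 ^ n * j)) by ring, pow_succ 2 n, mul_two,
      ngIter_add (hσ.constantCoeff_eq_zero (Nat.succ_pos _))]
    exact ih.ngComp_self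

lemma not_exists_ngIter_eq_X (hσ : HasLeadingTerm σ (2 * j + 1)) (hj : 0 < j) :
    ¬ ∃ N, 0 < N ∧ ngIter σ N = X := by
  rintro ⟨N, hN, hσN⟩
  have : NeZero N := ⟨hN.ne'⟩
  obtain ⟨a, b, hab, hmod⟩ :=
    Finite.exists_ne_map_eq_of_infinite fun n : ℕ => ((2 ^ n : ℕ) : ZMod N)
  have hiter := ngIter_eq_of_modEq (hσ.constantCoeff_eq_zero (Nat.succ_pos _)) hσN
    ((ZMod.natCast_eq_natCast_iff _ _ _).mp hmod)
  have hdepth := eq_of_X_pow_succ_dvd_sub_X_pow (hσ.ngIter_two_pow a)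
    (hiter ▸ hσ.ngIter_two_pow b)
  exact hab <| Nat.pow_right_injective le_rfl <|
    Nat.eq_of_mul_eq_mul_right (by omega : 0 < 2 * j) (Nat.add_right_cancel hdepth)

end HasLeadingTerm

lemma odd_of_hasDepth {σ : F2⟦X⟧} (hσ : IsNott σ) (hfin : ∃ N, 0 < N ∧ ngIter σ N = X)
    {m : ℕ} (hm : HasDepth σ m) : Odd m := by
  by_contra heven
  obtain ⟨j, rfl⟩ : ∃ j, m = 2 * j := Nat.not_odd_iff_even.mp heven |>.exists_two_nsmul _
  rcases Nat.eq_zero_or_pos j with rfl | hj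
  · exact hm.2 (by rw [map_sub, coeff_X, if_pos rfl, hσ.2, sub_self])
  · have hlead : coeff (2 * j + 1) (σ - X) = 1 :=
      (by decide : ∀ a : F2, a ≠ 0 → a = 1) _ hm.2
    exact (hasLeadingTerm_iff.mpr ⟨hm.1, hlead⟩).not_exists_ngIter_eq_X hj hfin

theorem statement10 :
    (∀ σ : PowerSeries F2, IsNott σ → σ ≠ PowerSeries.X →
      (∃ n : ℕ, 0 < n ∧ ngIter σ n = PowerSeries.X) →
      ∀ m : ℕ, HasDepth σ m → Odd m) ∧
    ∀ (σ : PowerSeries F2) (k : ℕ), IsNott σ → 2 ≤ k → Odd k →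
      (∀ i < k, PowerSeries.coeff (R := F2) i (σ - PowerSeries.X) = 0) →
      PowerSeries.coeff (R := F2) k (σ - PowerSeries.X) = 1 →
      (∀ n : ℕ, 1 ≤ n →
        (∀ i < 2 ^ n * (k - 1) + 1,
          PowerSeries.coeff (R := F2) i (ngIter σ (2 ^ n) - PowerSeries.X) = 0) ∧
        PowerSeries.coeff (R := F2) (2 ^ n * (k - 1) + 1) (ngIter σ (2 ^ n) - PowerSeries.X) = 1) ∧
      (∀ n : ℕ, 1 ≤ n → ngIter σ (2 ^ n) ≠ PowerSeries.X) ∧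
      ¬ ∃ n : ℕ, 0 < n ∧ ngIter σ n = PowerSeries.X := by
  refine ⟨fun σ hσ _ hfin m hm => odd_of_hasDepth hσ hfin hm, ?_⟩
  rintro σ k - hk ⟨j, rfl⟩ hlow hlead
  have hσ : HasLeadingTerm σ (2 * j + 1) := hasLeadingTerm_iff.mpr ⟨hlow, hlead⟩
  have hiter (n : ℕ) := hasLeadingTerm_iff.mp (hσ.ngIter_two_pow n)
  simp only [Nat.add_sub_cancel]
  refine ⟨fun n _ => hiter n, fun n _ hX => ?_, hσ.not_exists_ngIter_eq_X (by omega)⟩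
  simpa [hX] using (hiter n).2
end
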